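/- Let Γ be a digraph with a root α satisfying: Γ = desc(α); Γ has finite out-valency; desc^s(α) ∩ desc^t(α) = ∅ for s ≠ t; and property (G3): there is k such that for all ℓ ≥ k, x ∈ desc^ℓ(α) and β ∈ desc^1(α), if desc(β) ∩ desc(x) ≠ ∅ then x ∈ desc(β). Assume also desc(u) ≅ Γ for all u ∈ Γ (as induced subdigraphs, via isomorphisms mapping u to α). Then Γ satisfies property (T4): there is N such that for all l > N and x, a ∈ Γ, if b ∈ desc^l(x) and there is a directed edge from a to b, then a ∈ desc(x). -/

import Mathlib

/-- The descendant set of `u`: all vertices reachable from `u` by a directed path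
(including `u` itself). -/
def desc {V : Type*} (E : V → V → Prop) (u : V) : Set V :=
  {v | Relation.ReflTransGen E u v}

/-- `descArc E s u` : vertices reachable from `u` by an `s`-arc (a directed walk
of length `s` with no immediate backtracking). -/
def descArc {V : Type*} (E : V → V → Prop) (s : ℕ) (u : V) : Set V :=
  {v | ∃ f : ℕ → V, f 0 = u ∧ f s = v ∧ (∀ i, i < s → E (f i) (f (i + 1))) ∧
    ∀ i, 0 < i → i < s → f (i - 1) ≠ f (i + 1)}

/-!
Every vertex has a unique level, the `s` with `v ∈ descArc E s α`. An edge either climbs one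
level or descends one level along a 2-cycle, and an arc can never descend after climbing, so an
`l`-arc from `x` first descends `δ` reversible steps to a vertex `c` and then climbs `l - δ`
levels. The cone isomorphism at `x` sends `c` to a vertex of level `δ` whose descendant set is
everything. Transporting (G3) to every cone and applying it along an arc from `α` to `c` shows
that `a ∈ desc E c` as soon as `desc E a` meets `desc E c` and `a` lies at least `k` levels above
`c`. If vertices with full descendant set occur at unbounded levels, this makes every descendant
set full; otherwise `δ` is bounded, and a predecessor `a` of the end `b` of a long arc is either
`k` levels above `c`, hence in `desc E c ⊆ desc E x`, or a successor of `b`.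
-/

theorem Nat.exists_threshold_of_succ {P : ℕ → Prop} {l : ℕ}
    (hP : ∀ j, j + 1 < l → P j → P (j + 1)) :
    ∃ δ ≤ l, (∀ j < δ, ¬ P j) ∧ ∀ j, δ ≤ j → j < l → P j := by
  classical
  by_cases h : ∃ j, j < l ∧ P j
  · have hδ := Nat.find_spec h
    refine ⟨Nat.find h, hδ.1.le, fun j hj hPj => Nat.find_min h hj ⟨by omega, hPj⟩,
      fun j hδj hjl => ?_⟩
    induction j, hδj using Nat.le_induction with
    | base => exact hδ.2
    | succ j _ ih => exact hP j hjl (ih (by omega))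
  · push Not at h
    exact ⟨l, le_rfl, h, fun j hj hjl => by omega⟩

section

variable {V : Type*} {E : V → V → Prop}

section Desc

variable {u v w : V}

theorem mem_desc_self (u : V) : u ∈ desc E u := Relation.ReflTransGen.refl

theorem mem_desc_trans (h₁ : v ∈ desc E u) (h₂ : w ∈ desc E v) : w ∈ desc E u :=
  Relation.ReflTransGen.trans h₁ h₂

theorem mem_desc_of_edge (h : E u v) : v ∈ desc E u := Relation.ReflTransGen.single h

theorem mem_desc_tail (h₁ : v ∈ desc E u) (h : E v w) : w ∈ desc E u :=
  Relation.ReflTransGen.tail h₁ h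

end Desc

def IsArc (E : V → V → Prop) (f : ℕ → V) (s : ℕ) : Prop :=
  (∀ i, i < s → E (f i) (f (i + 1))) ∧ ∀ i, 0 < i → i < s → f (i - 1) ≠ f (i + 1)

theorem mem_descArc_iff {s : ℕ} {u v : V} :
    v ∈ descArc E s u ↔ ∃ f : ℕ → V, f 0 = u ∧ f s = v ∧ IsArc E f s :=
  Iff.rfl

namespace IsArc

variable {f : ℕ → V} {s : ℕ}

theorem edge (hf : IsArc E f s) {i : ℕ} (hi : i < s) : E (f i) (f (i + 1)) := hf.1 i hi

theorem mono (hf : IsArc E f s) {j : ℕ} (hj : j ≤ s) : IsArc E f j :=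
  ⟨fun i hi => hf.1 i (by omega), fun i h₁ h₂ => hf.2 i h₁ (by omega)⟩

theorem mem_descArc (hf : IsArc E f s) {j : ℕ} (hj : j ≤ s) : f j ∈ descArc E j (f 0) :=
  ⟨f, rfl, rfl, hf.mono hj⟩

theorem mem_desc (hf : IsArc E f s) {i j : ℕ} (hij : i ≤ j) (hj : j ≤ s) :
    f j ∈ desc E (f i) := by
  induction j, hij using Nat.le_induction with
  | base => exact mem_desc_self _
  | succ j _ ih => exact mem_desc_tail (ih (by omega)) (hf.edge (by omega))

theorem snoc (hf : IsArc E f s) {w : V} (hE : E (f s) w) (hw : s = 0 ∨ f (s - 1) ≠ w) :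
    IsArc E (Function.update f (s + 1) w) (s + 1) := by
  constructor
  · intro i hi
    rcases Nat.lt_or_ge i s with h | h
    · simpa [Function.update_of_ne (by omega : i ≠ s + 1),
        Function.update_of_ne (by omega : i + 1 ≠ s + 1)] using hf.edge h
    · obtain rfl : i = s := by omega
      simpa [Function.update_of_ne (by omega : i ≠ i + 1)] using hE
  · intro i h₁ h₂
    rcases Nat.lt_or_ge i s with h | h
    · simpa [Function.update_of_ne (by omega : i - 1 ≠ s + 1),
        Function.update_of_ne (by omega : i + 1 ≠ s + 1)] using hf.2 i h₁ h
    · obtain rfl : i = s := by omega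
      simpa [Function.update_of_ne (by omega : i - 1 ≠ i + 1)] using hw.resolve_left (by omega)

end IsArc

theorem self_mem_descArc_zero (u : V) : u ∈ descArc E 0 u :=
  ⟨fun _ => u, rfl, rfl, fun _ hi => absurd hi (by omega), fun _ _ hi => absurd hi (by omega)⟩

theorem mem_descArc_one_of_edge {u v : V} (h : E u v) : v ∈ descArc E 1 u := by
  refine ⟨fun i => if i = 0 then u else v, rfl, rfl, fun i hi => ?_, fun i h₁ h₂ => by omega⟩
  obtain rfl : i = 0 := by omega
  simpa using h

theorem descArc_subset_desc {s : ℕ} {u : V} : descArc E s u ⊆ desc E u := by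
  intro v hv
  obtain ⟨f, rfl, rfl, hf⟩ := mem_descArc_iff.1 hv
  exact hf.mem_desc (Nat.zero_le s) le_rfl

theorem exists_mem_descArc_of_mem_desc {u v : V} (h : v ∈ desc E u) :
    ∃ s, v ∈ descArc E s u := by
  induction h with
  | refl => exact ⟨0, self_mem_descArc_zero u⟩
  | @tail v w _ hE ih =>
    obtain ⟨s, hs⟩ := ih
    obtain ⟨f, hf0, rfl, hf⟩ := mem_descArc_iff.1 hs
    by_cases hback : s ≠ 0 ∧ f (s - 1) = w
    · exact ⟨s - 1, hback.2 ▸ hf0 ▸ hf.mem_descArc (by omega)⟩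
    · exact ⟨s + 1, Function.update f (s + 1) w, by simpa using hf0, by simp,
        hf.snoc hE (by tauto)⟩

section Level

variable {α : V}

def LevelsDisjoint (E : V → V → Prop) (α : V) : Prop :=
  ∀ s t : ℕ, s ≠ t → descArc E s α ∩ descArc E t α = ∅

-- `sInf ∅ = 0`, so this is meaningful only for `v` reachable by an arc from `α`.
noncomputable def level (E : V → V → Prop) (α v : V) : ℕ :=
  sInf {s | v ∈ descArc E s α}

theorem mem_descArc_level_of_mem {v : V} {s : ℕ} (h : v ∈ descArc E s α) :
    v ∈ descArc E (level E α v) α :=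
  Nat.sInf_mem (s := {s | v ∈ descArc E s α}) ⟨s, h⟩

theorem level_eq (hdisj : LevelsDisjoint E α) {v : V} {s : ℕ} (h : v ∈ descArc E s α) :
    level E α v = s := by
  by_contra hne
  have hv : v ∈ descArc E (level E α v) α ∩ descArc E s α := ⟨mem_descArc_level_of_mem h, h⟩
  rw [hdisj _ _ hne] at hv
  exact hv

theorem mem_descArc_level (hroot : ∀ v, v ∈ desc E α) (v : V) :
    v ∈ descArc E (level E α v) α :=
  (exists_mem_descArc_of_mem_desc (hroot v)).elim fun _ h => mem_descArc_level_of_mem h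

theorem IsArc.level_end_of_edge (hdisj : LevelsDisjoint E α) {f : ℕ → V} {s : ℕ}
    (hf : IsArc E f s) (hf0 : f 0 = α) {v : V} (hE : E (f s) v) :
    level E α v = s + 1 ∨ (s ≠ 0 ∧ f (s - 1) = v) := by
  by_cases hback : s ≠ 0 ∧ f (s - 1) = v
  · exact Or.inr hback
  · exact Or.inl (level_eq hdisj ⟨_, by simpa using hf0, by simp, hf.snoc hE (by tauto)⟩)

theorem level_of_edge (hroot : ∀ v, v ∈ desc E α) (hdisj : LevelsDisjoint E α) {u v : V}
    (hE : E u v) :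
    level E α v = level E α u + 1 ∨ (level E α u = level E α v + 1 ∧ E v u) := by
  obtain ⟨f, hf0, hfu, hf⟩ := mem_descArc_iff.1 (mem_descArc_level hroot u)
  rw [← hfu] at hE
  rcases hf.level_end_of_edge hdisj hf0 hE with hup | ⟨hpos, rfl⟩
  · exact Or.inl hup
  · have hlev := level_eq hdisj (hf0 ▸ hf.mem_descArc (Nat.sub_le _ 1))
    refine Or.inr ⟨by omega, ?_⟩
    simpa [Nat.sub_add_cancel (Nat.pos_of_ne_zero hpos), hfu] using
      hf.edge (i := level E α u - 1) (by omega)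

theorem level_le_of_mem_descArc (hroot : ∀ v, v ∈ desc E α) (hdisj : LevelsDisjoint E α)
    {s : ℕ} {u v : V} (h : v ∈ descArc E s u) : level E α v ≤ level E α u + s := by
  obtain ⟨f, rfl, rfl, hf⟩ := mem_descArc_iff.1 h
  clear h
  induction s with
  | zero => rfl
  | succ s ih =>
    have := ih (hf.mono (Nat.le_succ s))
    rcases level_of_edge hroot hdisj (hf.edge (Nat.lt_succ_self s)) with h | ⟨h, -⟩ <;> omega

theorem IsArc.level_succ_of_level_succ (hroot : ∀ v, v ∈ desc E α) (hdisj : LevelsDisjoint E α)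
    {f : ℕ → V} {l j : ℕ} (hf : IsArc E f l) (hj : j + 2 ≤ l)
    (hup : level E α (f (j + 1)) = level E α (f j) + 1) :
    level E α (f (j + 2)) = level E α (f (j + 1)) + 1 := by
  have hE₁ : E (f j) (f (j + 1)) := hf.edge (by omega)
  have hE₂ : E (f (j + 1)) (f (j + 2)) := hf.edge (i := j + 1) (by omega)
  rcases level_of_edge hroot hdisj hE₂ with h | ⟨hdown, -⟩
  · exact h
  exfalso
  -- Extending an arc from `α` to `f j` by `f (j + 1)`, the downward edge out of its end must
  -- return to its penultimate vertex `f j`, so `f` would backtrack at `j + 1`.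
  obtain ⟨g, hg0, hgj, hg⟩ := mem_descArc_iff.1 (mem_descArc_level hroot (f j))
  set m := level E α (f j)
  have hnoback : m = 0 ∨ g (m - 1) ≠ f (j + 1) := by
    refine or_iff_not_imp_left.2 fun hm hback => ?_
    have := level_eq hdisj (hback ▸ hg0 ▸ hg.mem_descArc (Nat.sub_le m 1))
    omega
  have hg' := hg.snoc (hgj ▸ hE₁) hnoback
  rcases hg'.level_end_of_edge hdisj (by simpa using hg0) (by simpa using hE₂) with h | ⟨-, h⟩
  · omega
  · exact hf.2 (j + 1) (by omega) (by omega) (by simpa [hgj] using h)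

theorem IsArc.exists_valley (hroot : ∀ v, v ∈ desc E α) (hdisj : LevelsDisjoint E α)
    {f : ℕ → V} {l : ℕ} (hf : IsArc E f l) :
    ∃ δ ≤ l, f 0 ∈ desc E (f δ) ∧ level E α (f l) = level E α (f δ) + (l - δ) := by
  obtain ⟨δ, hδl, hdown, hup⟩ :=
    Nat.exists_threshold_of_succ (P := fun j => level E α (f (j + 1)) = level E α (f j) + 1)
      (l := l) fun j hj h => hf.level_succ_of_level_succ hroot hdisj (by omega) h
  have hback : ∀ j ≤ δ, f 0 ∈ desc E (f j) := by
    intro j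
    induction j with
    | zero => exact fun _ => mem_desc_self _
    | succ j ih =>
      intro hj
      have hE := ((level_of_edge hroot hdisj (hf.edge (i := j) (by omega))).resolve_left
        (hdown j (by omega))).2
      exact mem_desc_trans (mem_desc_of_edge hE) (ih (by omega))
  have hclimb : ∀ j, δ ≤ j → j ≤ l → level E α (f j) = level E α (f δ) + (j - δ) := by
    intro j hδj
    induction j, hδj using Nat.le_induction with
    | base => simp
    | succ j hδj ih =>
      intro hj
      rw [hup j hδj (by omega), ih (by omega)]
      omega
  exact ⟨δ, hδl, hback δ le_rfl, hclimb l hδl le_rfl⟩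

end Level

def IsConeIso (E : V → V → Prop) (α r : V) (g : V → V) : Prop :=
  g r = α ∧ Set.BijOn g (desc E r) Set.univ ∧
    ∀ a ∈ desc E r, ∀ b ∈ desc E r, (E a b ↔ E (g a) (g b))

def G3At (E : V → V → Prop) (k : ℕ) (r : V) : Prop :=
  ∀ ℓ, k ≤ ℓ → ∀ x ∈ descArc E ℓ r, ∀ β ∈ descArc E 1 r,
    (desc E β ∩ desc E x).Nonempty → x ∈ desc E β

namespace IsConeIso

variable {α r : V} {g : V → V}

theorem map_mem_desc (hg : IsConeIso E α r g) {v w : V} (hv : v ∈ desc E r)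
    (hw : w ∈ desc E v) : g w ∈ desc E (g v) := by
  induction hw with
  | refl => exact mem_desc_self _
  | @tail c d hvc hE ih =>
    have hc : c ∈ desc E r := mem_desc_trans hv hvc
    exact mem_desc_tail ih ((hg.2.2 c hc d (mem_desc_tail hc hE)).1 hE)

theorem exists_mem_desc_eq (hg : IsConeIso E α r g) {v w' : V} (hv : v ∈ desc E r)
    (hw' : w' ∈ desc E (g v)) : ∃ w ∈ desc E v, g w = w' := by
  induction hw' with
  | refl => exact ⟨v, mem_desc_self v, rfl⟩
  | @tail c' d' _ hE ih =>
    obtain ⟨c, hc, rfl⟩ := ih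
    obtain ⟨d, hd, rfl⟩ := hg.2.1.surjOn (Set.mem_univ d')
    exact ⟨d, mem_desc_tail hc ((hg.2.2 c (mem_desc_trans hv hc) d hd).2 hE), rfl⟩

theorem mem_desc_iff (hg : IsConeIso E α r g) {v w : V} (hv : v ∈ desc E r)
    (hw : w ∈ desc E r) : g w ∈ desc E (g v) ↔ w ∈ desc E v := by
  refine ⟨fun h => ?_, hg.map_mem_desc hv⟩
  obtain ⟨w₀, hw₀, hgw⟩ := hg.exists_mem_desc_eq hv h
  rwa [← hg.2.1.injOn (mem_desc_trans hv hw₀) hw hgw]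

theorem map_mem_descArc (hg : IsConeIso E α r g) {s : ℕ} {v : V} (hv : v ∈ descArc E s r) :
    g v ∈ descArc E s α := by
  obtain ⟨f, rfl, rfl, hf⟩ := mem_descArc_iff.1 hv
  have hmem : ∀ j ≤ s, f j ∈ desc E (f 0) := fun j hj => hf.mem_desc (Nat.zero_le j) hj
  refine ⟨g ∘ f, hg.1, rfl, fun i hi => ?_, fun i h₁ h₂ heq => ?_⟩
  · exact (hg.2.2 _ (hmem i hi.le) _ (hmem (i + 1) hi)).1 (hf.edge hi)
  · exact hf.2 i h₁ h₂ (hg.2.1.injOn (hmem _ (by omega)) (hmem _ (by omega)) heq)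

theorem g3At (hg : IsConeIso E α r g) {k : ℕ} (hk : G3At E k α) : G3At E k r := by
  rintro ℓ hℓ x hx β hβ ⟨w, hwβ, hwx⟩
  have hβr := descArc_subset_desc hβ
  have hxr := descArc_subset_desc hx
  exact (hg.mem_desc_iff hβr hxr).1 (hk ℓ hℓ _ (hg.map_mem_descArc hx) _
    (hg.map_mem_descArc hβ) ⟨g w, hg.map_mem_desc hβr hwβ, hg.map_mem_desc hxr hwx⟩)

theorem exists_mem_descArc_forall_mem_desc (hroot : ∀ v, v ∈ desc E α)
    (hg : IsConeIso E α r g) {δ : ℕ} {c : V} (hc : c ∈ descArc E δ r) (hr : r ∈ desc E c) :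
    ∃ w ∈ descArc E δ α, ∀ v, v ∈ desc E w :=
  ⟨g c, hg.map_mem_descArc hc,
    fun v => mem_desc_trans (hg.1 ▸ hg.map_mem_desc (descArc_subset_desc hc) hr) (hroot v)⟩

end IsConeIso

theorem mem_desc_of_level_add_le {α : V} (hroot : ∀ v, v ∈ desc E α)
    (hdisj : LevelsDisjoint E α) {k : ℕ} (hG3 : ∀ r, G3At E k r) {a c : V}
    (hlev : level E α c + k ≤ level E α a) (hac : (desc E a ∩ desc E c).Nonempty) :
    a ∈ desc E c := by
  obtain ⟨w, hwa, hwc⟩ := hac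
  obtain ⟨F, hF0, hFc, hF⟩ := mem_descArc_iff.1 (mem_descArc_level hroot c)
  -- (G3) at `F n` moves `a` into `desc E (F (n + 1))`, as `a` lies at least `k` levels below `F n`.
  suffices h : ∀ n ≤ level E α c, a ∈ desc E (F n) from hFc ▸ h _ le_rfl
  intro n
  induction n with
  | zero => exact fun _ => hF0 ▸ hroot a
  | succ n ih =>
    intro hn
    obtain ⟨s, hs⟩ := exists_mem_descArc_of_mem_desc (ih (by omega))
    have hFn : level E α (F n) = n := level_eq hdisj (hF0 ▸ hF.mem_descArc (by omega))
    have hks : k ≤ s := by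
      have := level_le_of_mem_descArc hroot hdisj hs
      omega
    have hwF : w ∈ desc E (F (n + 1)) := mem_desc_trans (hFc ▸ hF.mem_desc hn le_rfl) hwc
    exact hG3 (F n) s hks a hs _ (mem_descArc_one_of_edge (hF.edge hn)) ⟨w, hwF, hwa⟩

end

theorem stmt18_general {V : Type*} (E : V → V → Prop) (α : V)
    -- Γ = desc(α):
    (hroot : ∀ v : V, v ∈ desc E α)
    -- the sets descˢ(α) are pairwise disjoint:
    (hdisj : ∀ s t : ℕ, s ≠ t → descArc E s α ∩ descArc E t α = ∅)
    -- (G3):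
    (hG3 : ∃ k : ℕ, ∀ ℓ, k ≤ ℓ → ∀ x ∈ descArc E ℓ α, ∀ β ∈ descArc E 1 α,
      (desc E β ∩ desc E x).Nonempty → x ∈ desc E β)
    -- desc(u) ≅ Γ for all u, via isomorphisms of induced subdigraphs mapping u to α:
    (hiso : ∀ u : V, ∃ g : V → V, g u = α ∧ Set.BijOn g (desc E u) Set.univ ∧
      ∀ a ∈ desc E u, ∀ b ∈ desc E u, (E a b ↔ E (g a) (g b))) :
    -- (T4):
    ∃ N : ℕ, ∀ l, N < l → ∀ x a b : V, b ∈ descArc E l x → E a b → a ∈ desc E x := by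
  have hiso : ∀ u, ∃ g, IsConeIso E α u g := hiso
  obtain ⟨k, hk⟩ := hG3
  have hG3 : ∀ r, G3At E k r := fun r => (hiso r).elim fun _ hg => hg.g3At hk
  by_cases hbdd : ∃ M, ∀ w, (∀ v, v ∈ desc E w) → level E α w ≤ M
  · obtain ⟨M, hM⟩ := hbdd
    refine ⟨M + k, fun l hl x a b hb hab => ?_⟩
    obtain ⟨f, rfl, rfl, hf⟩ := mem_descArc_iff.1 hb
    obtain ⟨δ, hδl, hback, hclimb⟩ := hf.exists_valley hroot hdisj
    have hδM : δ ≤ M := by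
      obtain ⟨g, hg⟩ := hiso (f 0)
      obtain ⟨w, hw, hwfull⟩ :=
        hg.exists_mem_descArc_forall_mem_desc hroot (hf.mem_descArc hδl) hback
      exact level_eq hdisj hw ▸ hM w hwfull
    have hx : f δ ∈ desc E (f 0) := hf.mem_desc (Nat.zero_le δ) hδl
    rcases level_of_edge hroot hdisj hab with hup | ⟨-, hba⟩
    · exact mem_desc_trans hx (mem_desc_of_level_add_le hroot hdisj hG3 (by omega)
        ⟨f l, mem_desc_of_edge hab, hf.mem_desc hδl le_rfl⟩)
    · exact mem_desc_tail (hf.mem_desc (Nat.zero_le l) le_rfl) hba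
  · push Not at hbdd
    refine ⟨0, fun l _ x a b _ _ => ?_⟩
    obtain ⟨w, hwfull, hw⟩ := hbdd (level E α x + k)
    have hxw : w ∈ desc E x :=
      mem_desc_of_level_add_le hroot hdisj hG3 hw.le ⟨x, hwfull x, mem_desc_self x⟩
    exact mem_desc_trans hxw (hwfull a)

theorem stmt18 {V : Type*} (E : V → V → Prop) (α : V)
    -- Γ = desc(α):
    (hroot : ∀ v : V, v ∈ desc E α)
    -- finite out-valency:
    (hval : ∀ v : V, {w | E v w}.Finite)
    -- the sets descˢ(α) are pairwise disjoint:
    (hdisj : ∀ s t : ℕ, s ≠ t → descArc E s α ∩ descArc E t α = ∅)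
    -- (G3):
    (hG3 : ∃ k : ℕ, ∀ ℓ, k ≤ ℓ → ∀ x ∈ descArc E ℓ α, ∀ β ∈ descArc E 1 α,
      (desc E β ∩ desc E x).Nonempty → x ∈ desc E β)
    -- desc(u) ≅ Γ for all u, via isomorphisms of induced subdigraphs mapping u to α:
    (hiso : ∀ u : V, ∃ g : V → V, g u = α ∧ Set.BijOn g (desc E u) Set.univ ∧
      ∀ a ∈ desc E u, ∀ b ∈ desc E u, (E a b ↔ E (g a) (g b))) :
    -- (T4):
    ∃ N : ℕ, ∀ l, N < l → ∀ x a b : V, b ∈ descArc E l x → E a b → a ∈ desc E x :=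
  stmt18_general E α hroot hdisj hG3 hiso
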